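/- Let S be the (N−1)×N forward difference matrix and T the M×(M−1) difference matrix. The maximum eigenvalue of the Hessian matrix H = (1/τ)Bᵀ B, where B = [[I_M ⊗ S, −I, 0], [Tᵀ ⊗ I_N, 0, −I]], is at most 12/τ. -/

import Mathlib

open Matrix Kronecker

/-- Forward difference matrix `S ∈ ℝ^{N×(N+1)}` with `S i i = -1`, `S i (i+1) = 1`. -/
def Smat (N : ℕ) : Matrix (Fin N) (Fin (N + 1)) ℝ :=
  fun i j => if j = i.castSucc then -1 else if j = i.succ then 1 else 0

/-- Difference matrix `T ∈ ℝ^{(M+1)×M}` with `T (j+1) j = 1`, `T j j = -1`. -/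
def Tmat (M : ℕ) : Matrix (Fin (M + 1)) (Fin M) ℝ :=
  fun i j => if i = j.succ then 1 else if i = j.castSucc then -1 else 0

/-- The block matrix `B = [[I_M ⊗ S, −I, 0], [Tᵀ ⊗ I_N, 0, −I]]`. -/
def Bmat (N M : ℕ) :
    Matrix ((Fin (M + 1) × Fin N) ⊕ (Fin M × Fin (N + 1)))
      ((Fin (M + 1) × Fin (N + 1)) ⊕ ((Fin (M + 1) × Fin N) ⊕ (Fin M × Fin (N + 1)))) ℝ :=
  fun row col =>
    match row, col with
    | Sum.inl b, Sum.inl a => ((1 : Matrix (Fin (M + 1)) (Fin (M + 1)) ℝ) ⊗ₖ Smat N) b a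
    | Sum.inl b, Sum.inr (Sum.inl b') => if b = b' then -1 else 0
    | Sum.inl _, Sum.inr (Sum.inr _) => 0
    | Sum.inr g, Sum.inl a => ((Tmat M)ᵀ ⊗ₖ (1 : Matrix (Fin (N + 1)) (Fin (N + 1)) ℝ)) g a
    | Sum.inr _, Sum.inr (Sum.inl _) => 0
    | Sum.inr g, Sum.inr (Sum.inr g') => if g = g' then -1 else 0

/-!
Every row of `B` has exactly three nonzero entries, all `±1`, so the square of each coordinate
of `B v` is at most three times the sum of the squares of the three coordinates of `v` it
involves. A coordinate of the first block of `v` occurs in at most four rows (two differences in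
each direction) and every other coordinate in one, hence `‖B v‖² ≤ 12 ‖v‖²`, and the Rayleigh
quotient `⟪v, Bᵀ B v⟫ / ‖v‖² = ‖B v‖² / ‖v‖²` bounds every eigenvalue of `Bᵀ B` by `12`.
-/

open Finset

section ForwardDifference

variable {N : ℕ}

lemma Fin.sum_comp_succ_le {α : Type*} [AddCommMonoid α] [PartialOrder α] [IsOrderedAddMonoid α]
    {f : Fin (N + 1) → α} (hf : 0 ≤ f) : ∑ i : Fin N, f i.succ ≤ ∑ j, f j := by
  rw [Fin.sum_univ_succ]
  exact le_add_of_nonneg_left (hf 0)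

lemma Fin.sum_comp_castSucc_le {α : Type*} [AddCommMonoid α] [PartialOrder α]
    [IsOrderedAddMonoid α] {f : Fin (N + 1) → α} (hf : 0 ≤ f) :
    ∑ i : Fin N, f i.castSucc ≤ ∑ j, f j := by
  rw [Fin.sum_univ_castSucc]
  exact le_add_of_nonneg_right (hf _)

lemma sq_sub_sub_le (a b c : ℝ) : (a - b - c) ^ 2 ≤ 3 * (a ^ 2 + b ^ 2 + c ^ 2) := by
  nlinarith [sq_nonneg (a + b), sq_nonneg (a + c), sq_nonneg (b - c)]

lemma sum_sq_succ_sub_castSucc_sub_le (f : Fin (N + 1) → ℝ) (g : Fin N → ℝ) :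
    ∑ i, (f i.succ - f i.castSucc - g i) ^ 2 ≤ 3 * (2 * ∑ j, f j ^ 2 + ∑ i, g i ^ 2) := by
  have hf : 0 ≤ fun j => f j ^ 2 := fun j => sq_nonneg (f j)
  calc ∑ i, (f i.succ - f i.castSucc - g i) ^ 2
      ≤ ∑ i, 3 * (f i.succ ^ 2 + f i.castSucc ^ 2 + g i ^ 2) :=
        sum_le_sum fun i _ => sq_sub_sub_le _ _ _
    _ = 3 * (∑ i : Fin N, f i.succ ^ 2 + ∑ i : Fin N, f i.castSucc ^ 2 + ∑ i, g i ^ 2) := by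
        simp only [← mul_sum, sum_add_distrib]
    _ ≤ 3 * (2 * ∑ j, f j ^ 2 + ∑ i, g i ^ 2) := by
        linarith [Fin.sum_comp_succ_le hf, Fin.sum_comp_castSucc_le hf]

end ForwardDifference

lemma Smat_mulVec (N : ℕ) (f : Fin (N + 1) → ℝ) (i : Fin N) :
    (Smat N *ᵥ f) i = f i.succ - f i.castSucc := by
  have hrow : Smat N i = Pi.single i.succ 1 - Pi.single i.castSucc 1 := by
    funext j
    simp only [Smat, Pi.sub_apply, Pi.single_apply]
    have := (Fin.castSucc_lt_succ (i := i)).ne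
    split_ifs <;> simp_all
  change Smat N i ⬝ᵥ f = _
  rw [hrow, sub_dotProduct, single_one_dotProduct, single_one_dotProduct]

lemma Tmat_transpose_mulVec (M : ℕ) (f : Fin (M + 1) → ℝ) (g : Fin M) :
    ((Tmat M)ᵀ *ᵥ f) g = f g.succ - f g.castSucc := by
  have hcol : (Tmat M)ᵀ g = Pi.single g.succ 1 - Pi.single g.castSucc 1 := by
    funext b
    simp only [Tmat, transpose_apply, Pi.sub_apply, Pi.single_apply]
    have := (Fin.castSucc_lt_succ (i := g)).ne
    split_ifs <;> simp_all
  change (Tmat M)ᵀ g ⬝ᵥ f = _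
  rw [hcol, sub_dotProduct, single_one_dotProduct, single_one_dotProduct]

section Bmat

variable {N M : ℕ}
  (v : (Fin (M + 1) × Fin (N + 1)) ⊕ ((Fin (M + 1) × Fin N) ⊕ (Fin M × Fin (N + 1))) → ℝ)

lemma Bmat_mulVec_inl (b : Fin (M + 1)) (i : Fin N) :
    (Bmat N M *ᵥ v) (.inl (b, i)) =
      v (.inl (b, i.succ)) - v (.inl (b, i.castSucc)) - v (.inr (.inl (b, i))) := by
  simp only [mulVec, dotProduct, Fintype.sum_sum_type, Fintype.sum_prod_type, Bmat,
    kroneckerMap_apply, one_apply, ite_mul, one_mul, zero_mul, sum_ite_eq, mem_univ, if_true,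
    sum_const_zero, add_zero, sum_ite_irrel]
  have hS := Smat_mulVec N (fun j => v (.inl (b, j))) i
  simp only [mulVec, dotProduct] at hS
  linear_combination hS

lemma Bmat_mulVec_inr (g : Fin M) (i : Fin (N + 1)) :
    (Bmat N M *ᵥ v) (.inr (g, i)) =
      v (.inl (g.succ, i)) - v (.inl (g.castSucc, i)) - v (.inr (.inr (g, i))) := by
  simp only [mulVec, dotProduct, Fintype.sum_sum_type, Fintype.sum_prod_type, Bmat,
    kroneckerMap_apply, one_apply, mul_ite, ite_mul, mul_one, one_mul, zero_mul, mul_zero,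
    sum_ite_eq, mem_univ, if_true, sum_const_zero, zero_add]
  have hT := Tmat_transpose_mulVec M (fun b => v (.inl (b, i))) g
  simp only [mulVec, dotProduct] at hT
  linear_combination hT

lemma Bmat_mulVec_dotProduct_self_le :
    Bmat N M *ᵥ v ⬝ᵥ Bmat N M *ᵥ v ≤ 12 * (v ⬝ᵥ v) := by
  set U := ∑ a, v (.inl a) ^ 2
  set P := ∑ x, v (.inr (.inl x)) ^ 2
  set Q := ∑ x, v (.inr (.inr x)) ^ 2
  have hS : ∑ x, (Bmat N M *ᵥ v) (.inl x) ^ 2 ≤ 3 * (2 * U + P) :=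
    calc ∑ x, (Bmat N M *ᵥ v) (.inl x) ^ 2
        = ∑ b, ∑ i : Fin N,
            (v (.inl (b, i.succ)) - v (.inl (b, i.castSucc)) - v (.inr (.inl (b, i)))) ^ 2 := by
          simp only [Fintype.sum_prod_type, Bmat_mulVec_inl]
      _ ≤ ∑ b, 3 * (2 * ∑ j, v (.inl (b, j)) ^ 2 + ∑ i, v (.inr (.inl (b, i))) ^ 2) :=
          sum_le_sum fun b _ => sum_sq_succ_sub_castSucc_sub_le
            (fun j => v (.inl (b, j))) (fun i => v (.inr (.inl (b, i))))
      _ = 3 * (2 * U + P) := by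
          simp only [U, P, Fintype.sum_prod_type, ← mul_sum, sum_add_distrib]
  have hT : ∑ x, (Bmat N M *ᵥ v) (.inr x) ^ 2 ≤ 3 * (2 * U + Q) :=
    calc ∑ x, (Bmat N M *ᵥ v) (.inr x) ^ 2
        = ∑ i, ∑ g : Fin M,
            (v (.inl (g.succ, i)) - v (.inl (g.castSucc, i)) - v (.inr (.inr (g, i)))) ^ 2 := by
          simp only [Fintype.sum_prod_type_right, Bmat_mulVec_inr]
      _ ≤ ∑ i, 3 * (2 * ∑ b, v (.inl (b, i)) ^ 2 + ∑ g, v (.inr (.inr (g, i))) ^ 2) :=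
          sum_le_sum fun i _ => sum_sq_succ_sub_castSucc_sub_le
            (fun b => v (.inl (b, i))) (fun g => v (.inr (.inr (g, i))))
      _ = 3 * (2 * U + Q) := by
          simp only [U, Q, Fintype.sum_prod_type_right, ← mul_sum, sum_add_distrib]
  have hP : 0 ≤ P := sum_nonneg fun _ _ => sq_nonneg _
  have hQ : 0 ≤ Q := sum_nonneg fun _ _ => sq_nonneg _
  simp only [dotProduct, Fintype.sum_sum_type, ← sq]
  linarith

end Bmat

lemma le_of_transpose_mul_self_mulVec_eq_smul {m n : Type*} [Fintype m] [Fintype n]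
    {A : Matrix m n ℝ} {c μ : ℝ} {v : n → ℝ} (hA : A *ᵥ v ⬝ᵥ A *ᵥ v ≤ c * (v ⬝ᵥ v))
    (hv : v ≠ 0) (h : (Aᵀ * A) *ᵥ v = μ • v) : μ ≤ c := by
  have hpos : 0 < v ⬝ᵥ v := by
    simpa using (dotProduct_self_star_pos_iff (v := v)).2 hv
  have hquad : A *ᵥ v ⬝ᵥ A *ᵥ v = μ * (v ⬝ᵥ v) := by
    rw [← smul_eq_mul, ← dotProduct_smul, ← h, ← mulVec_mulVec, dotProduct_mulVec v Aᵀ,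
      vecMul_transpose]
  exact le_of_mul_le_mul_right (hquad ▸ hA) hpos

theorem eigenvalue_hessian_le_general (N M : ℕ) (τ : ℝ) (hτ : 0 < τ)
    (μ : ℝ)
    (v : (Fin (M + 1) × Fin (N + 1)) ⊕ ((Fin (M + 1) × Fin N) ⊕ (Fin M × Fin (N + 1))) → ℝ)
    (hv : v ≠ 0)
    (hμ : ((1 / τ) • ((Bmat N M)ᵀ * Bmat N M)).mulVec v = μ • v) :
    μ ≤ 12 / τ := by
  have hBtB : ((Bmat N M)ᵀ * Bmat N M) *ᵥ v = (τ * μ) • v := by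
    rw [mul_smul, ← hμ, smul_mulVec, smul_smul, mul_one_div_cancel hτ.ne', one_smul]
  rw [le_div_iff₀ hτ, mul_comm]
  exact le_of_transpose_mul_self_mulVec_eq_smul (Bmat_mulVec_dotProduct_self_le v) hv hBtB

/-- Every eigenvalue of the Hessian `H = (1/τ) Bᵀ B` is at most `12/τ`. -/
theorem eigenvalue_hessian_le (N M : ℕ) (hN : 1 ≤ N) (hM : 1 ≤ M) (τ : ℝ) (hτ : 0 < τ)
    (μ : ℝ)
    (v : (Fin (M + 1) × Fin (N + 1)) ⊕ ((Fin (M + 1) × Fin N) ⊕ (Fin M × Fin (N + 1))) → ℝ)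
    (hv : v ≠ 0)
    (hμ : ((1 / τ) • ((Bmat N M)ᵀ * Bmat N M)).mulVec v = μ • v) :
    μ ≤ 12 / τ :=
  eigenvalue_hessian_le_general N M τ hτ μ v hv hμ
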